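/- In the NE-HPE framework with w (m,M)-regular, define Λ_k = Σ_{i=1}^k λ_i and the ergodic residual r^a_k = (1/Λ_k) Σ_{i=1}^k λ_i r_i. Then for every k ≥ 1: ‖r^a_k‖* ≤ (2√2 M / (√m Λ_k)) · ((dw)_0 + η_0)^{1/2}, where (dw)_0 = inf{(dw)_{z_0}(z*) : z* ∈ T^{-1}(0)}. -/

import Mathlib

/-- The dual (extended) seminorm of a seminorm `p` on a real inner product space. -/
noncomputable def dualSN {Z : Type*} [NormedAddCommGroup Z] [InnerProductSpace ℝ Z]
    (p : Seminorm ℝ Z) (u : Z) : EReal :=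
  ⨆ v : {v : Z // p v ≤ 1}, ((inner ℝ u v.1 : ℝ) : EReal)

/-- A set-valued operator `T` is monotone. -/
def IsMonotoneOp {Z : Type*} [NormedAddCommGroup Z] [InnerProductSpace ℝ Z]
    (T : Z → Set Z) : Prop :=
  ∀ u₁ v₁ u₂ v₂ : Z, u₂ ∈ T u₁ → v₂ ∈ T v₁ → 0 ≤ (inner ℝ (u₂ - v₂) (u₁ - v₁) : ℝ)

/-- A monotone operator is maximal. -/
def IsMaximalMonotoneOp {Z : Type*} [NormedAddCommGroup Z] [InnerProductSpace ℝ Z]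
    (T : Z → Set Z) : Prop :=
  IsMonotoneOp T ∧
    ∀ u v : Z, (∀ u₁ u₂ : Z, u₂ ∈ T u₁ → 0 ≤ (inner ℝ (v - u₂) (u - u₁) : ℝ)) → v ∈ T u

/-- The `ε`-enlargement `T^{[ε]}` of a monotone operator `T`. -/
def epsEnlargement {Z : Type*} [NormedAddCommGroup Z] [InnerProductSpace ℝ Z]
    (T : Z → Set Z) (ε : ℝ) (v : Z) : Set Z :=
  {v' : Z | ∀ v₁ v₂ : Z, v₂ ∈ T v₁ → -ε ≤ (inner ℝ (v' - v₂) (v - v₁) : ℝ)}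

/-!
Since `λ_i r_i = ∇w(z_{i-1}) - ∇w(z_i)`, the weighted residuals telescope:
`Λ_k r^a_k = ∇w(z_0) - ∇w(z_k)`, so by the Lipschitz bound on `∇w` it suffices to control the
displacement `p(z_0 - z_k)`. The Bregman three-point identity together with the error criterion and
the `ε`-enlargement inclusion shows that `(dw)_{z_i}(z*) + η_i` is nonincreasing for every zero `z*`
of `T`; strong convexity of `w` then puts both `z_0` and `z_k` within `√(2((dw)_{z_0}(z*) + η_0)/m)`
of `z*`, and taking the infimum over `z*` gives the bound.
-/

open Finset

lemma sum_Icc_one_sub_telescope {G : Type*} [AddCommGroup G] (f : ℕ → G) (n : ℕ) :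
    ∑ i ∈ Icc 1 n, (f (i - 1) - f i) = f 0 - f n := by
  induction n with
  | zero => simp
  | succ n ih =>
    rw [sum_Icc_succ_top (by omega), ih, Nat.add_sub_cancel]
    abel

lemma Seminorm.sq_map_sub_le {E : Type*} [AddCommGroup E] [Module ℝ E] (p : Seminorm ℝ E)
    (a b c : E) : p (a - b) ^ 2 ≤ 2 * (p (a - c) ^ 2 + p (b - c) ^ 2) := by
  have htri : p (a - b) ≤ p (a - c) + p (b - c) := by
    simpa [map_sub_rev p c b] using map_sub_le_add p (a - c) (b - c)
  nlinarith [apply_nonneg p (a - b), sq_nonneg (p (a - c) - p (b - c))]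

lemma le_two_sqrt_two_div_sqrt_mul_sqrt {m x D : ℝ} (hm : 0 < m)
    (h : m / 8 * x ^ 2 ≤ D) : x ≤ 2 * √2 / √m * √D := by
  have hsqrt : 2 * √2 / √m * √D = √(8 * D / m) := by
    rw [Real.sqrt_div' _ hm.le, Real.sqrt_mul (by norm_num),
      show (8 : ℝ) = 2 ^ 2 * 2 by norm_num, Real.sqrt_mul (by norm_num), Real.sqrt_sq zero_le_two]
    ring
  rw [hsqrt]
  exact Real.le_sqrt_of_sq_le (by rw [le_div_iff₀ hm]; linarith)

section InnerProductSpace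

variable {Z : Type*} [NormedAddCommGroup Z] [InnerProductSpace ℝ Z]

lemma inner_le_dualSN (p : Seminorm ℝ Z) (u : Z) {v : Z} (hv : p v ≤ 1) :
    (inner ℝ u v : EReal) ≤ dualSN p u :=
  le_iSup (fun v : {v : Z // p v ≤ 1} => ((inner ℝ u v.1 : ℝ) : EReal)) ⟨v, hv⟩

lemma dualSN_smul_le {p : Seminorm ℝ Z} {u : Z} {c B : ℝ} (hc : 0 ≤ c) (hu : dualSN p u ≤ B) :
    dualSN p (c • u) ≤ (c * B : ℝ) := by
  refine iSup_le fun ⟨v, hv⟩ => ?_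
  have : inner ℝ u v ≤ B := EReal.coe_le_coe_iff.1 ((inner_le_dualSN p u hv).trans hu)
  rw [real_inner_smul_left]
  exact EReal.coe_le_coe_iff.2 (mul_le_mul_of_nonneg_left this hc)

lemma bregman_three_point {w : Z → ℝ} {g : Z → Z} {dw : Z → Z → ℝ}
    (hdw : ∀ z z' : Z, dw z z' = w z' - w z - inner ℝ (g z) (z' - z)) (a b c : Z) :
    dw a c = dw a b + dw b c + inner ℝ (g a - g b) (b - c) := by
  simp only [hdw, inner_sub_left, inner_sub_right]
  ring

lemma bregman_add_le_of_hpe_step {w : Z → ℝ} {g : Z → Z} {dw : Z → Z → ℝ}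
    (hdw : ∀ z z' : Z, dw z z' = w z' - w z - inner ℝ (g z) (z' - z))
    {T : Z → Set Z} {zs z₀ z₁ zt r : Z} {lam eps η₀ η₁ σ : ℝ}
    (hzs : 0 ∈ T zs) (hlam : 0 ≤ lam) (hr : lam • r = g z₀ - g z₁)
    (hincl : r ∈ epsEnlargement T eps zt)
    (herr : dw z₁ zt + lam * eps + η₁ ≤ σ * dw z₀ zt + η₀)
    (hσ : σ ≤ 1) (hdw_nonneg : 0 ≤ dw z₀ zt) :
    dw z₁ zs + η₁ ≤ dw z₀ zs + η₀ := by
  have hr_zs : -eps ≤ inner ℝ r (zt - zs) := by simpa using hincl zs 0 hzs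
  have hsplit : inner ℝ (g z₀ - g z₁) (z₁ - zs)
      = inner ℝ (g z₀ - g z₁) (z₁ - zt) + lam * inner ℝ r (zt - zs) := by
    rw [← hr, real_inner_smul_left, real_inner_smul_left, ← mul_add, ← inner_add_right,
      sub_add_sub_cancel]
  have h_zs := bregman_three_point hdw z₀ z₁ zs
  have h_zt := bregman_three_point hdw z₀ z₁ zt
  nlinarith [mul_le_of_le_one_left hdw_nonneg hσ, mul_le_mul_of_nonneg_left hr_zs hlam]

end InnerProductSpace

theorem nehpe_ergodic_residual_general {Z : Type*} [NormedAddCommGroup Z] [InnerProductSpace ℝ Z]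
    (Zs : Set Z) (p : Seminorm ℝ Z)
    (w : Z → ℝ) (g : Z → Z) (m M : ℝ) (hm : 0 < m) (hM : 0 < M)
    (dw : Z → Z → ℝ)
    (hdw : ∀ z z' : Z, dw z z' = w z' - w z - (inner ℝ (g z) (z' - z) : ℝ))
    (hstrong : ∀ z ∈ Zs, ∀ z' ∈ Zs, m / 2 * (p (z - z'))^2 ≤ dw z z')
    (hlip : ∀ z ∈ Zs, ∀ z' ∈ Zs, dualSN p (g z - g z') ≤ ((M * p (z - z') : ℝ) : EReal))
    (T : Z → Set Z)
    (hdom : ∀ v : Z, (T v).Nonempty → v ∈ Zs)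
    (hT0 : ∃ zs : Z, 0 ∈ T zs)
    (z ztil : ℕ → Z) (hzZ : ∀ k, z k ∈ Zs) (hztilZ : ∀ k, ztil k ∈ Zs)
    (lam eps eta : ℕ → ℝ) (r : ℕ → Z) (σ : ℝ)
    (hσ : σ ∈ Set.Icc (0 : ℝ) 1)
    (hlam : ∀ k, 1 ≤ k → 0 < lam k)
    (heta : ∀ k, 0 ≤ eta k)
    (hr : ∀ k, 1 ≤ k → r k = (1 / lam k) • (g (z (k - 1)) - g (z k)))
    (hincl : ∀ k, 1 ≤ k → r k ∈ epsEnlargement T (eps k) (ztil k))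
    (herr : ∀ k, 1 ≤ k →
      dw (z k) (ztil k) + lam k * eps k + eta k ≤ σ * dw (z (k - 1)) (ztil k) + eta (k - 1))
    (dw0 : ℝ) (hdw0 : dw0 = sInf ((fun zs => dw (z 0) zs) '' {zs : Z | 0 ∈ T zs}))
    (k : ℕ) (hk : 1 ≤ k) :
    dualSN p ((1 / ∑ i ∈ Finset.Icc 1 k, lam i) • ∑ i ∈ Finset.Icc 1 k, lam i • r i)
      ≤ ((2 * Real.sqrt 2 * M / (Real.sqrt m * ∑ i ∈ Finset.Icc 1 k, lam i) *
          Real.sqrt (dw0 + eta 0) : ℝ) : EReal) := by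
  have hstep : ∀ i, 1 ≤ i → lam i • r i = g (z (i - 1)) - g (z i) := fun i hi => by
    rw [hr i hi, smul_smul, mul_one_div_cancel (hlam i hi).ne', one_smul]
  have hfejer : ∀ zs, 0 ∈ T zs → Antitone fun n => dw (z n) zs + eta n := fun zs hzs =>
    antitone_nat_of_succ_le fun n =>
      bregman_add_le_of_hpe_step hdw hzs (hlam (n + 1) n.succ_pos).le (hstep (n + 1) n.succ_pos)
        (hincl (n + 1) n.succ_pos) (herr (n + 1) n.succ_pos) hσ.2
        ((hstrong _ (hzZ n) _ (hztilZ _)).trans' (by positivity))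
  have hdisp : m / 8 * p (z 0 - z k) ^ 2 ≤ dw0 + eta 0 := by
    obtain ⟨zs₀, hzs₀⟩ := hT0
    suffices m / 8 * p (z 0 - z k) ^ 2 - eta 0 ≤ dw0 by linarith
    refine hdw0 ▸ le_csInf ⟨_, zs₀, hzs₀, rfl⟩ ?_
    rintro _ ⟨zs, hzs, rfl⟩
    have hzsZ := hdom zs ⟨0, hzs⟩
    have h0zs := hstrong _ (hzZ 0) _ hzsZ
    have hkzs := (hstrong _ (hzZ k) _ hzsZ).trans
      (le_sub_right_of_add_le (hfejer zs hzs k.zero_le))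
    nlinarith [p.sq_map_sub_le (z 0) (z k) zs, heta 0, heta k]
  set Λ := ∑ i ∈ Icc 1 k, lam i
  have hΛ : 0 < Λ :=
    sum_pos (fun i hi => hlam i (mem_Icc.1 hi).1) ⟨1, mem_Icc.2 ⟨le_rfl, hk⟩⟩
  rw [sum_congr rfl fun i hi => hstep i (mem_Icc.1 hi).1,
    sum_Icc_one_sub_telescope (fun i => g (z i))]
  refine (dualSN_smul_le (by positivity) (hlip _ (hzZ 0) _ (hzZ k))).trans
    (EReal.coe_le_coe_iff.2 ?_)
  calc 1 / Λ * (M * p (z 0 - z k))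
      ≤ 1 / Λ * (M * (2 * √2 / √m * √(dw0 + eta 0))) := by
        gcongr; exact le_two_sqrt_two_div_sqrt_mul_sqrt hm hdisp
    _ = _ := by field_simp

/-- Ergodic residual bound for the NE-HPE framework with `w` `(m,M)`-regular: with
`Λ_k = Σ_{i=1}^k λ_i` and `r^a_k = (1/Λ_k) Σ_{i=1}^k λ_i r_i`, for every `k ≥ 1`
`‖r^a_k‖* ≤ (2√2 M/(√m Λ_k))·((dw)_0 + η_0)^{1/2}`, where
`(dw)_0 = inf {(dw)_{z_0}(z*) : z* ∈ T⁻¹(0)}`. -/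
theorem nehpe_ergodic_residual {Z : Type*} [NormedAddCommGroup Z] [InnerProductSpace ℝ Z]
    [FiniteDimensional ℝ Z]
    (Zs : Set Z) (hZs : Convex ℝ Zs) (hZsclosed : IsClosed Zs) (p : Seminorm ℝ Z)
    (w : Z → ℝ) (g : Z → Z) (m M : ℝ) (hm : 0 < m) (hM : 0 < M)
    (dw : Z → Z → ℝ)
    (hdw : ∀ z z' : Z, dw z z' = w z' - w z - (inner ℝ (g z) (z' - z) : ℝ))
    (hstrong : ∀ z ∈ Zs, ∀ z' ∈ Zs, m / 2 * (p (z - z'))^2 ≤ dw z z')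
    (hlip : ∀ z ∈ Zs, ∀ z' ∈ Zs, dualSN p (g z - g z') ≤ ((M * p (z - z') : ℝ) : EReal))
    (T : Z → Set Z) (hT : IsMaximalMonotoneOp T)
    (hdom : ∀ v : Z, (T v).Nonempty → v ∈ Zs)
    (hT0 : ∃ zs : Z, 0 ∈ T zs)
    (z ztil : ℕ → Z) (hzZ : ∀ k, z k ∈ Zs) (hztilZ : ∀ k, ztil k ∈ Zs)
    (lam eps eta : ℕ → ℝ) (r : ℕ → Z) (σ : ℝ)
    (hσ : σ ∈ Set.Icc (0 : ℝ) 1)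
    (hlam : ∀ k, 1 ≤ k → 0 < lam k)
    (heps : ∀ k, 1 ≤ k → 0 ≤ eps k)
    (heta : ∀ k, 0 ≤ eta k)
    (hr : ∀ k, 1 ≤ k → r k = (1 / lam k) • (g (z (k - 1)) - g (z k)))
    (hincl : ∀ k, 1 ≤ k → r k ∈ epsEnlargement T (eps k) (ztil k))
    (herr : ∀ k, 1 ≤ k →
      dw (z k) (ztil k) + lam k * eps k + eta k ≤ σ * dw (z (k - 1)) (ztil k) + eta (k - 1))
    (dw0 : ℝ) (hdw0 : dw0 = sInf ((fun zs => dw (z 0) zs) '' {zs : Z | 0 ∈ T zs}))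
    (k : ℕ) (hk : 1 ≤ k) :
    dualSN p ((1 / ∑ i ∈ Finset.Icc 1 k, lam i) • ∑ i ∈ Finset.Icc 1 k, lam i • r i)
      ≤ ((2 * Real.sqrt 2 * M / (Real.sqrt m * ∑ i ∈ Finset.Icc 1 k, lam i) *
          Real.sqrt (dw0 + eta 0) : ℝ) : EReal) :=
  nehpe_ergodic_residual_general Zs p w g m M hm hM dw hdw hstrong hlip T hdom hT0 z ztil hzZ hztilZ
    lam eps eta r σ hσ hlam heta hr hincl herr dw0 hdw0 k hk
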